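/- Let V be a real inner product space, let x₁,…,xₙ ∈ V, α₁,…,αₙ ∈ ℝ, c ∈ ℝ, and suppose z ∈ V satisfies Σᵢ αᵢ‖z - xᵢ‖ = c. For y ∈ V with z - xᵢ ≠ 0 for all i, define for each i the quantity δᵢ = (‖z - xᵢ‖² + ⟨z - xᵢ, y⟩)/‖z - xᵢ‖ if αᵢ > 0 and δᵢ = √(‖y‖² + (‖z - xᵢ‖² + ⟨z - xᵢ, y⟩)²/‖z - xᵢ‖²) if αᵢ < 0, and assume ‖z - xᵢ‖² + ⟨z - xᵢ, y⟩ ≥ 0 for all i. If c + (Σᵢ αᵢ)‖y‖ - Σᵢ αᵢ δᵢ < 0, then Σᵢ αᵢ‖z + y - xᵢ‖ ≥ c + (Σᵢ αᵢ)‖y‖. -/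

import Mathlib

/-!
Write `w = z - x i`. Since `‖w‖² + ⟪w, y⟫ = ⟪w, w + y⟫`, Cauchy–Schwarz gives `δ i ≤ ‖w + y‖`
when `α i > 0`; and `‖w + y‖² = ‖y‖² + (‖w‖² + ⟪w, y⟫)² / ‖w‖² - ⟪w, y⟫² / ‖w‖²` gives
`‖w + y‖ ≤ δ i` when `α i ≤ 0`. Either way `α i * δ i ≤ α i * ‖z + y - x i‖`, so
`∑ α i * ‖z + y - x i‖ ≥ ∑ α i * δ i > c + (∑ α i) * ‖y‖`.
-/

open scoped RealInnerProductSpace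

section

variable {V : Type*} [NormedAddCommGroup V] [InnerProductSpace ℝ V]

theorem real_inner_self_add_right (w y : V) : ⟪w, w + y⟫ = ‖w‖ ^ 2 + ⟪w, y⟫ := by
  rw [inner_add_right, real_inner_self_eq_norm_sq]

theorem norm_sq_add_inner_div_norm_le_norm_add (w y : V) :
    (‖w‖ ^ 2 + ⟪w, y⟫) / ‖w‖ ≤ ‖w + y‖ := by
  rcases eq_or_ne w 0 with rfl | hw
  · simp
  rw [div_le_iff₀' (norm_pos_iff.mpr hw), ← real_inner_self_add_right]
  exact real_inner_le_norm w (w + y)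

theorem norm_add_le_sqrt_norm_sq_add_sq_div (w y : V) :
    ‖w + y‖ ≤ √(‖y‖ ^ 2 + (‖w‖ ^ 2 + ⟪w, y⟫) ^ 2 / ‖w‖ ^ 2) := by
  rcases eq_or_ne w 0 with rfl | hw
  · simp
  have hw2 : (0 : ℝ) < ‖w‖ ^ 2 := by positivity
  have hexpand : (‖w‖ ^ 2 + ⟪w, y⟫) ^ 2 / ‖w‖ ^ 2
      = ‖w‖ ^ 2 + 2 * ⟪w, y⟫ + ⟪w, y⟫ ^ 2 / ‖w‖ ^ 2 := by
    field_simp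
    ring
  apply Real.le_sqrt_of_sq_le
  rw [norm_add_sq_real, hexpand]
  linarith [div_nonneg (sq_nonneg ⟪w, y⟫) hw2.le]

end

theorem locus_add_lower_bound_general {V : Type*} [NormedAddCommGroup V] [InnerProductSpace ℝ V]
    {n : ℕ} (x : Fin n → V) (α : Fin n → ℝ) (c : ℝ) (z y : V)
    (δ : Fin n → ℝ)
    (hδ : ∀ i, δ i = if 0 < α i then
        (‖z - x i‖ ^ 2 + (inner ℝ (z - x i) y : ℝ)) / ‖z - x i‖
      else
        Real.sqrt (‖y‖ ^ 2 + (‖z - x i‖ ^ 2 + (inner ℝ (z - x i) y : ℝ)) ^ 2 / ‖z - x i‖ ^ 2))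
    (hlt : c + (∑ i, α i) * ‖y‖ - ∑ i, α i * δ i < 0) :
    ∑ i, α i * ‖z + y - x i‖ ≥ c + (∑ i, α i) * ‖y‖ := by
  have hterm : ∀ i, α i * δ i ≤ α i * ‖z + y - x i‖ := fun i => by
    rw [hδ i, add_sub_right_comm]
    split_ifs with hα
    · exact mul_le_mul_of_nonneg_left (norm_sq_add_inner_div_norm_le_norm_add _ _) hα.le
    · exact mul_le_mul_of_nonpos_left (norm_add_le_sqrt_norm_sq_add_sq_div _ _) (not_lt.mp hα)
  linarith [Finset.sum_le_sum fun i (_ : i ∈ Finset.univ) => hterm i]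

theorem locus_add_lower_bound {V : Type*} [NormedAddCommGroup V] [InnerProductSpace ℝ V]
    {n : ℕ} (x : Fin n → V) (α : Fin n → ℝ) (c : ℝ) (z y : V)
    (hz : ∑ i, α i * ‖z - x i‖ = c)
    (hne : ∀ i, z - x i ≠ 0)
    (hnn : ∀ i, ‖z - x i‖ ^ 2 + (inner ℝ (z - x i) y : ℝ) ≥ 0)
    (δ : Fin n → ℝ)
    (hδ : ∀ i, δ i = if 0 < α i then
        (‖z - x i‖ ^ 2 + (inner ℝ (z - x i) y : ℝ)) / ‖z - x i‖
      else
        Real.sqrt (‖y‖ ^ 2 + (‖z - x i‖ ^ 2 + (inner ℝ (z - x i) y : ℝ)) ^ 2 / ‖z - x i‖ ^ 2))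
    (hlt : c + (∑ i, α i) * ‖y‖ - ∑ i, α i * δ i < 0) :
    ∑ i, α i * ‖z + y - x i‖ ≥ c + (∑ i, α i) * ‖y‖ :=
  locus_add_lower_bound_general x α c z y δ hδ hlt
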